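/- arXiv:1601.05188 — 2 statements merged into one kernel-verified Lean document; each statement's English description precedes it below -/
import Mathlib

section
/- Sliding-method uniqueness lemma: let f(x,u) = [β(x) − γ(x) − d_S β(x) u / (d_S S_*(x) + (d_S − d_I)u)]·u with β, γ, S_* continuous and positive on Ω̄ and d_S, d_I > 0 such that d_S S_*(x) + (d_S − d_I)u > 0 in the relevant range. Then for every x and every τ > 1 and u > 0 with d_S S_*(x) + (d_S − d_I)u > 0 and d_S S_*(x) + (d_S − d_I)τu > 0, one has f(x, τu) < τ f(x, u); i.e., u ↦ f(x,u)/u is strictly decreasing in u. -/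
/-- strict sublinearity of the nonlinearity
`f(x,u) = (β(x) - γ(x))u - d_S β(x) u² / (d_S S_*(x) + (d_S - d_I)u)`:
for `τ > 1`, `u > 0` (with positive denominators), `f(x, τu) < τ f(x, u)`. -/
theorem stmt18 {N : ℕ} (Ω : Set (Fin N → ℝ))
    (β γ Sstar : (Fin N → ℝ) → ℝ)
    (hβcont : ContinuousOn β (closure Ω)) (hγcont : ContinuousOn γ (closure Ω))
    (hScont : ContinuousOn Sstar (closure Ω))
    (hβpos : ∀ x ∈ closure Ω, 0 < β x) (hγpos : ∀ x ∈ closure Ω, 0 < γ x)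
    (hSpos : ∀ x ∈ closure Ω, 0 < Sstar x)
    (dS dI : ℝ) (hdS : 0 < dS) (hdI : 0 < dI)
    (f : (Fin N → ℝ) → ℝ → ℝ)
    (hf : ∀ x u, f x u = (β x - γ x) * u
        - dS * β x * u ^ 2 / (dS * Sstar x + (dS - dI) * u)) :
    ∀ x ∈ closure Ω, ∀ τ u : ℝ, 1 < τ → 0 < u →
      0 < dS * Sstar x + (dS - dI) * u →
      0 < dS * Sstar x + (dS - dI) * (τ * u) →
      f x (τ * u) < τ * f x u := by
  intro x hx τ u hτ hu hD1 hD2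
  rw [hf, hf]
  have hβx := hβpos x hx
  have hA : 0 < dS * β x := by positivity
  have key : τ * (dS * β x * u ^ 2 / (dS * Sstar x + (dS - dI) * u))
      < dS * β x * (τ * u) ^ 2 / (dS * Sstar x + (dS - dI) * (τ * u)) := by
    rw [mul_div_assoc', div_lt_div_iff₀ hD1 hD2]
    have hS : 0 < dS * Sstar x := by
      have := hSpos x hx; positivity
    nlinarith [mul_pos hA (mul_pos (mul_pos hu hu) (mul_pos (mul_pos (lt_trans one_pos hτ) (sub_pos.mpr hτ)) hS))]
  linarith
end

section
/- If u₁, u₂ > 0 are two continuous positive solutions on a compact set Ω̄ of the nonlocal equation d_I(∫_Ω J(x−y)u(y)dy − u(x)) + f(x,u(x)) = 0 with f strictly sublinear (f(x,τu) < τ f(x,u) for all τ > 1, u > 0) and J nonnegative with J(0) > 0, then u₁ = u₂. (Define τ* = inf{τ : u₁ ≤ τu₂ on Ω̄}; show τ* ≤ 1 by contradiction, then by symmetry u₁ = u₂.) -/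
open MeasureTheory

lemma stmt19_aux {N : ℕ} (Ω : Set (Fin N → ℝ)) (hΩmeas : MeasurableSet Ω)
    (hΩbdd : Bornology.IsBounded Ω) (hΩne : Ω.Nonempty)
    (J : (Fin N → ℝ) → ℝ) (hJcont : Continuous J) (hJpos : ∀ x, 0 ≤ J x)
    (dI : ℝ) (hdI : 0 < dI)
    (f : (Fin N → ℝ) → ℝ → ℝ)
    (hfsub : ∀ x ∈ closure Ω, ∀ τ u : ℝ, 1 < τ → 0 < u →
        f x (τ * u) < τ * f x u)
    (u₁ u₂ : (Fin N → ℝ) → ℝ)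
    (hu₁cont : ContinuousOn u₁ (closure Ω)) (hu₂cont : ContinuousOn u₂ (closure Ω))
    (hu₁pos : ∀ x ∈ closure Ω, 0 < u₁ x) (hu₂pos : ∀ x ∈ closure Ω, 0 < u₂ x)
    (heq₁ : ∀ x ∈ closure Ω,
        dI * ((∫ y in Ω, J (x - y) * u₁ y) - u₁ x) + f x (u₁ x) = 0)
    (heq₂ : ∀ x ∈ closure Ω,
        dI * ((∫ y in Ω, J (x - y) * u₂ y) - u₂ x) + f x (u₂ x) = 0) :
    ∀ x ∈ closure Ω, u₁ x ≤ u₂ x := by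
  have hKcl : IsClosed (closure Ω) := isClosed_closure
  have hKcomp : IsCompact (closure Ω) :=
    Metric.isCompact_of_isClosed_isBounded hKcl hΩbdd.closure
  have hKne : (closure Ω).Nonempty := hΩne.closure
  have hg : ContinuousOn (fun x => u₁ x / u₂ x) (closure Ω) :=
    hu₁cont.div hu₂cont (fun x hx => (hu₂pos x hx).ne')
  obtain ⟨x₀, hx₀K, hmax⟩ := hKcomp.exists_isMaxOn hKne hg
  set τ := u₁ x₀ / u₂ x₀ with hτdef
  have hu₂x₀ : 0 < u₂ x₀ := hu₂pos x₀ hx₀K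
  have hτpos : 0 < τ := div_pos (hu₁pos x₀ hx₀K) hu₂x₀
  have hle : ∀ x ∈ closure Ω, u₁ x ≤ τ * u₂ x := by
    intro x hx
    have h := hmax hx
    simp only at h
    exact (div_le_iff₀ (hu₂pos x hx)).mp h
  by_cases hτ : τ ≤ 1
  · intro x hx
    calc u₁ x ≤ τ * u₂ x := hle x hx
      _ ≤ 1 * u₂ x := by
          exact mul_le_mul_of_nonneg_right hτ (hu₂pos x hx).le
      _ = u₂ x := one_mul _
  · exfalso
    have hτ1 : 1 < τ := lt_of_not_ge hτ
    have hequ : u₁ x₀ = τ * u₂ x₀ := by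
      rw [hτdef, div_mul_cancel₀ _ hu₂x₀.ne']
    have hi1 : IntegrableOn (fun y => J (x₀ - y) * u₁ y) Ω := by
      have hc : ContinuousOn (fun y => J (x₀ - y) * u₁ y) (closure Ω) :=
        ((hJcont.comp (continuous_const.sub continuous_id)).continuousOn).mul hu₁cont
      exact (hc.integrableOn_compact hKcomp).mono_set subset_closure
    have hi2 : IntegrableOn (fun y => J (x₀ - y) * u₂ y) Ω := by
      have hc : ContinuousOn (fun y => J (x₀ - y) * u₂ y) (closure Ω) :=
        ((hJcont.comp (continuous_const.sub continuous_id)).continuousOn).mul hu₂cont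
      exact (hc.integrableOn_compact hKcomp).mono_set subset_closure
    set I₁ := ∫ y in Ω, J (x₀ - y) * u₁ y with hI₁
    set I₂ := ∫ y in Ω, J (x₀ - y) * u₂ y with hI₂
    have key1 : I₁ ≤ τ * I₂ := by
      have h2 : τ * I₂ = ∫ y in Ω, τ * (J (x₀ - y) * u₂ y) := by
        rw [integral_const_mul]
      rw [h2]
      refine setIntegral_mono_on hi1 (hi2.const_mul τ) hΩmeas ?_
      intro y hy
      have hy' : y ∈ closure Ω := subset_closure hy
      have h1 := hle y hy'
      have hJ := hJpos (x₀ - y)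
      calc J (x₀ - y) * u₁ y ≤ J (x₀ - y) * (τ * u₂ y) :=
            mul_le_mul_of_nonneg_left h1 hJ
        _ = τ * (J (x₀ - y) * u₂ y) := by ring
    have key2 : τ * I₂ < I₁ := by
      have e₁ := heq₁ x₀ hx₀K
      have e₂ := heq₂ x₀ hx₀K
      have hf := hfsub x₀ hx₀K τ (u₂ x₀) hτ1 hu₂x₀
      rw [← hequ] at hf
      -- f x₀ (u₁ x₀) = dI * (u₁ x₀ - I₁), f x₀ (u₂ x₀) = dI * (u₂ x₀ - I₂)
      have hf1 : f x₀ (u₁ x₀) = dI * (u₁ x₀ - I₁) := by rw [← hI₁] at e₁; linarith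
      have hf2 : f x₀ (u₂ x₀) = dI * (u₂ x₀ - I₂) := by rw [← hI₂] at e₂; linarith
      rw [hf1, hf2] at hf
      have hmul : dI * (τ * I₂) < dI * I₁ := by nlinarith [hf, hequ]
      exact (mul_lt_mul_iff_right₀ hdI).mp hmul
    linarith

/-- sliding-method uniqueness for positive continuous solutions of
`d_I (∫_Ω J(x-y)u(y)dy - u(x)) + f(x, u(x)) = 0` when `f` is strictly sublinear,
assuming the propagation property for the kernel. -/
theorem stmt19 {N : ℕ} (Ω : Set (Fin N → ℝ)) (hΩmeas : MeasurableSet Ω)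
    (hΩbdd : Bornology.IsBounded Ω) (hΩne : Ω.Nonempty)
    (J : (Fin N → ℝ) → ℝ) (hJcont : Continuous J) (hJpos : ∀ x, 0 ≤ J x)
    (hJsymm : ∀ x, J x = J (-x)) (hJ0 : 0 < J 0)
    (dI : ℝ) (hdI : 0 < dI)
    (f : (Fin N → ℝ) → ℝ → ℝ)
    (hfcont : ∀ x ∈ closure Ω, ContinuousOn (f x) (Set.Ioi 0))
    (hfsub : ∀ x ∈ closure Ω, ∀ τ u : ℝ, 1 < τ → 0 < u →
        f x (τ * u) < τ * f x u)
    (hprop : ∀ w : (Fin N → ℝ) → ℝ, ContinuousOn w (closure Ω) →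
        (∀ y ∈ Ω, 0 ≤ w y) →
        ∀ xstar ∈ closure Ω, (∫ y in Ω, J (xstar - y) * w y) = 0 →
        ∀ y ∈ Ω, w y = 0)
    (u₁ u₂ : (Fin N → ℝ) → ℝ)
    (hu₁cont : ContinuousOn u₁ (closure Ω)) (hu₂cont : ContinuousOn u₂ (closure Ω))
    (hu₁pos : ∀ x ∈ closure Ω, 0 < u₁ x) (hu₂pos : ∀ x ∈ closure Ω, 0 < u₂ x)
    (heq₁ : ∀ x ∈ closure Ω,
        dI * ((∫ y in Ω, J (x - y) * u₁ y) - u₁ x) + f x (u₁ x) = 0)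
    (heq₂ : ∀ x ∈ closure Ω,
        dI * ((∫ y in Ω, J (x - y) * u₂ y) - u₂ x) + f x (u₂ x) = 0) :
    ∀ x ∈ closure Ω, u₁ x = u₂ x := by
  intro x hx
  have h1 := stmt19_aux Ω hΩmeas hΩbdd hΩne J hJcont hJpos dI hdI f hfsub
    u₁ u₂ hu₁cont hu₂cont hu₁pos hu₂pos heq₁ heq₂ x hx
  have h2 := stmt19_aux Ω hΩmeas hΩbdd hΩne J hJcont hJpos dI hdI f hfsub
    u₂ u₁ hu₂cont hu₁cont hu₂pos hu₁pos heq₂ heq₁ x hx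
  exact le_antisymm h1 h2
end
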